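/- Every point of the surface S(r,t) = ((R/a)·cos r·cos t, (R/a)·sin r·cos t, R·sin t), with a = cos(r − (i−1)·2π/n) and parameters in the stated ranges, satisfies x·cos θᵢ + y·sin θᵢ ≤ R where θᵢ = (i−1)·2π/n, with equality exactly on the i-th sector where t is such that cos t = a⁻¹·a, i.e., the surface lies inside the infinite prism over the regular n-gon of apothem R. -/

import Mathlib

open Real

/-!
Write `θₖ = (k - 1)·(2π/n)` and `x = r - θⱼ`, so `|x| ≤ π/n` and `a = cos x ≥ 0`. The left-hand side
is `(R/a)·cos t·cos(r - θᵢ)`, and `r - θᵢ = x + (j - i)·(2π/n)`. Among the angles `x + m·(2π/n)`,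
`m ∈ ℤ`, the angle `x` itself is the closest to `0` modulo `2π`, so `cos (r - θᵢ) ≤ cos x = a`.
-/

theorem cos_add_two_mul_le_cos {x d : ℝ} (hd₀ : 0 ≤ d) (hdπ : d ≤ π) (hxd₀ : 0 ≤ x + d)
    (hxdπ : x + d ≤ π) : cos (x + 2 * d) ≤ cos x := by
  have hdiff : cos (x + 2 * d) - cos x = -2 * sin (x + d) * sin d := by
    rw [cos_sub_cos]; ring_nf
  nlinarith [mul_nonneg (sin_nonneg_of_nonneg_of_le_pi hxd₀ hxdπ)
    (sin_nonneg_of_nonneg_of_le_pi hd₀ hdπ)]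

theorem cos_add_nat_mul_le_cos {n k : ℕ} (hk : k < n) {x : ℝ} (hx : |x| ≤ π / n) :
    cos (x + k * (2 * π / n)) ≤ cos x := by
  rcases Nat.eq_zero_or_pos k with rfl | hk₀
  · simp
  obtain ⟨hx₁, hx₂⟩ := abs_le.mp hx
  have hn : (0 : ℝ) < n := by exact_mod_cast hk₀.trans hk
  have hk₁ : (1 : ℝ) ≤ k := by exact_mod_cast hk₀
  have hkn : (k : ℝ) + 1 ≤ n := by exact_mod_cast hk
  have hstep : 0 ≤ π / n := by positivity
  have hnπ : (n : ℝ) * (π / n) = π := by field_simp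
  have htwo : (k : ℝ) * (2 * π / n) = 2 * (k * (π / n)) := by ring
  rw [htwo]
  apply cos_add_two_mul_le_cos <;> nlinarith

theorem cos_add_int_mul_le_cos {n : ℕ} {x : ℝ} (hx : |x| ≤ π / n) (m : ℤ) :
    cos (x + m * (2 * π / n)) ≤ cos x := by
  rcases Nat.eq_zero_or_pos n with rfl | hn
  · simp
  obtain ⟨k, hk, q, rfl⟩ : ∃ k < n, ∃ q : ℤ, m = k + n * q :=
    ⟨(m % n).toNat, by have := Int.emod_lt_of_pos m (by omega : (0 : ℤ) < n); omega, m / n,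
      by rw [Int.toNat_of_nonneg (Int.emod_nonneg m (by omega)), Int.emod_add_mul_ediv]⟩
  have hreduce :
      x + ((k + n * q : ℤ) : ℝ) * (2 * π / n) = x + k * (2 * π / n) + q * (2 * π) := by
    push_cast; field_simp; ring
  rw [hreduce, cos_add_int_mul_two_pi]
  exact cos_add_nat_mul_le_cos hk hx

theorem surface_inside_prism_general (R : ℝ) (hR : 0 < R) (n : ℕ) (hn : 3 ≤ n)
    (j : ℕ) (r : ℝ)
    (hr : r ∈ Set.Icc (((-1 : ℝ) / 2 + ((j : ℝ) - 1)) * (2 * π / n))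
      (((-1 : ℝ) / 2 + (j : ℝ)) * (2 * π / n)))
    (a : ℝ) (ha : a = Real.cos (r - ((j : ℝ) - 1) * (2 * π / n)))
    (t : ℝ) (ht : t ∈ Set.Icc 0 (π / 2))
    (i : ℕ) :
    ((R / a) * Real.cos r * Real.cos t) * Real.cos (((i : ℝ) - 1) * (2 * π / n))
      + ((R / a) * Real.sin r * Real.cos t) * Real.sin (((i : ℝ) - 1) * (2 * π / n)) ≤ R := by
  set x := r - ((j : ℝ) - 1) * (2 * π / n) with hx_def
  have hx : |x| ≤ π / n := by
    have hstep : 2 * π / n = 2 * (π / n) := by ring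
    rw [hstep] at hr hx_def
    exact abs_le.mpr ⟨by linarith [hr.1], by linarith [hr.2]⟩
  have hπn : π / n ≤ π / 2 :=
    div_le_div_of_nonneg_left pi_pos.le two_pos (by exact_mod_cast (by omega : 2 ≤ n))
  have ha₀ : 0 ≤ a :=
    ha ▸ cos_nonneg_of_mem_Icc ⟨by linarith [neg_abs_le x], by linarith [le_abs_self x]⟩
  have hangle : r - ((i : ℝ) - 1) * (2 * π / n) = x + ((j - i : ℤ) : ℝ) * (2 * π / n) := by
    push_cast; ring
  have hcos : cos (r - ((i : ℝ) - 1) * (2 * π / n)) ≤ a := by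
    rw [ha, hangle]; exact cos_add_int_mul_le_cos hx _
  have hct₀ : 0 ≤ cos t := cos_nonneg_of_mem_Icc ⟨by linarith [ht.1, pi_pos], ht.2⟩
  calc _ = R / a * (cos t * cos (r - ((i : ℝ) - 1) * (2 * π / n))) := by rw [cos_sub]; ring
    _ ≤ R / a * a := by
        gcongr
        nlinarith [cos_le_one t]
    _ ≤ R := by
        rcases ha₀.eq_or_lt with rfl | ha₀
        · simpa using hR.le
        · rw [div_mul_cancel₀ _ ha₀.ne']

theorem surface_inside_prism (R : ℝ) (hR : 0 < R) (n : ℕ) (hn : 3 ≤ n)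
    (j : ℕ) (hj : j ∈ Finset.Icc 1 n) (r : ℝ)
    (hr : r ∈ Set.Icc (((-1 : ℝ) / 2 + ((j : ℝ) - 1)) * (2 * π / n))
      (((-1 : ℝ) / 2 + (j : ℝ)) * (2 * π / n)))
    (a : ℝ) (ha : a = Real.cos (r - ((j : ℝ) - 1) * (2 * π / n)))
    (t : ℝ) (ht : t ∈ Set.Icc 0 (π / 2))
    (i : ℕ) (hi : i ∈ Finset.Icc 1 n) :
    ((R / a) * Real.cos r * Real.cos t) * Real.cos (((i : ℝ) - 1) * (2 * π / n))
      + ((R / a) * Real.sin r * Real.cos t) * Real.sin (((i : ℝ) - 1) * (2 * π / n)) ≤ R :=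
  surface_inside_prism_general R hR n hn j r hr a ha t ht i
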